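/- arXiv:math/0608439 — 2 statements merged into one kernel-verified Lean document; each statement's English description precedes it below -/
import Mathlib

section
/- Let F be a real inner product space, n a natural number, and f : EuclideanSpace ℝ (Fin n) → F a map differentiable at a point x with f(x) ≠ 0, and let e₁,…,eₙ be the standard orthonormal basis of EuclideanSpace ℝ (Fin n). Write ∂ᵢg(x) for the directional derivative Dg(x)(eᵢ). If Σᵢ (∂ᵢ(y ↦ ‖f(y)‖)(x))² = Σᵢ ‖∂ᵢf(x)‖², then for every i there exists a real number αᵢ such that ∂ᵢf(x) = αᵢ · f(x). -/
/-!
Where `f x ≠ 0` one has `∂ᵢ‖f‖(x) = ⟪f x, ∂ᵢf(x)⟫ / ‖f x‖`, so by Cauchy–Schwarz every term of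
the left-hand sum is at most the matching term on the right. Equality of the sums therefore forces
equality termwise, and the equality case of Cauchy–Schwarz makes `∂ᵢf(x)` parallel to `f x`.
-/

open scoped RealInnerProductSpace

section CauchySchwarz

variable {F : Type*} [NormedAddCommGroup F] [InnerProductSpace ℝ F]

theorem sq_real_inner_div_norm_le (u v : F) : (⟪u, v⟫ / ‖u‖) ^ 2 ≤ ‖v‖ ^ 2 := by
  rcases eq_or_ne u 0 with rfl | hu
  · simp
  have hu' : 0 < ‖u‖ := norm_pos_iff.2 hu
  rw [div_pow, div_le_iff₀ (by positivity), ← sq_abs, ← mul_pow, mul_comm]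
  exact pow_le_pow_left₀ (abs_nonneg _) (abs_real_inner_le_norm u v) 2

theorem exists_eq_smul_of_sq_real_inner_div_norm_eq {u v : F} (hu : u ≠ 0)
    (h : (⟪u, v⟫ / ‖u‖) ^ 2 = ‖v‖ ^ 2) : ∃ α : ℝ, v = α • u := by
  have hu' : 0 < ‖u‖ := norm_pos_iff.2 hu
  have habs : |⟪u, v⟫| = ‖u‖ * ‖v‖ := by
    rw [div_pow, div_eq_iff (by positivity), ← sq_abs, ← mul_pow, mul_comm] at h
    exact (sq_eq_sq₀ (abs_nonneg _) (by positivity)).1 h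
  exact Or.resolve_left (((norm_inner_eq_norm_tfae ℝ u v).out 0 2).1 habs) hu

end CauchySchwarz

theorem HasFDerivAt.norm {E F : Type*} [NormedAddCommGroup E] [NormedSpace ℝ E]
    [NormedAddCommGroup F] [InnerProductSpace ℝ F] {f : E → F} {f' : E →L[ℝ] F} {x : E}
    (hf : HasFDerivAt f f' x) (h0 : f x ≠ 0) :
    HasFDerivAt (fun y => ‖f y‖) (‖f x‖⁻¹ • (innerSL ℝ (f x)).comp f') x := by
  have hsqrt := hf.norm_sq.sqrt (pow_ne_zero 2 (norm_ne_zero_iff.2 h0))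
  simp only [Real.sqrt_sq (norm_nonneg _)] at hsqrt
  convert hsqrt using 1
  ext v
  simp only [smul_apply, ContinuousLinearMap.comp_apply, coe_innerSL_apply,
    smul_eq_mul, one_div, mul_inv_rev, nsmul_eq_mul, Nat.cast_ofNat]
  field_simp

/-- Equality analysis in the Kato inequality: if
`∑ i (∂ᵢ‖f‖(x))² = ∑ i ‖∂ᵢ f(x)‖²` for a map `f` differentiable at `x` with
`f x ≠ 0`, then each directional derivative `∂ᵢ f(x)` is a real multiple of
`f x`. -/
theorem kato_equality_case
    {F : Type*} [NormedAddCommGroup F] [InnerProductSpace ℝ F]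
    (n : ℕ) (f : EuclideanSpace ℝ (Fin n) → F) (x : EuclideanSpace ℝ (Fin n))
    (hf : DifferentiableAt ℝ f x) (hfx : f x ≠ 0)
    (heq : ∑ i : Fin n,
        (fderiv ℝ (fun y => ‖f y‖) x (EuclideanSpace.single i (1 : ℝ))) ^ 2 =
      ∑ i : Fin n, ‖fderiv ℝ f x (EuclideanSpace.single i (1 : ℝ))‖ ^ 2) :
    ∀ i : Fin n, ∃ α : ℝ,
      fderiv ℝ f x (EuclideanSpace.single i (1 : ℝ)) = α • f x := by
  have hderiv : ∀ v, fderiv ℝ (fun y => ‖f y‖) x v = ⟪f x, fderiv ℝ f x v⟫ / ‖f x‖ := by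
    intro v
    rw [(hf.hasFDerivAt.norm hfx).fderiv]
    simp [div_eq_inv_mul]
  simp only [hderiv] at heq
  intro i
  refine exists_eq_smul_of_sq_real_inner_div_norm_eq hfx ?_
  exact (Finset.sum_eq_sum_iff_of_le fun i _ => sq_real_inner_div_norm_le _ _).1 heq i
    (Finset.mem_univ i)
end

section
/- Let r > 0, 0 < ρ₀ < r/2, and 0 < θ₀ < 1 be real numbers, and set t₀ = (r/2 − ρ₀)·tan θ₀. Define δ = t₀²ρ₀/((ρ₀ − r/2)² + t₀²) and B = t₀ + √(4δ(ρ₀ − δ)). Then δ < 4θ₀²ρ₀ and B < rθ₀ + 4θ₀ρ₀. -/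
lemma tan_lt_two_mul (θ : ℝ) (h0 : 0 < θ) (h1 : θ < 1) : Real.tan θ < 2 * θ := by
  have hπ3 : θ < Real.pi / 3 := lt_of_lt_of_le h1 (by nlinarith [Real.pi_gt_three])
  have hcos : (1:ℝ) / 2 < Real.cos θ := by
    have := Real.cos_lt_cos_of_nonneg_of_le_pi h0.le
      (by nlinarith [Real.pi_pos] : Real.pi / 3 ≤ Real.pi) hπ3
    rwa [Real.cos_pi_div_three] at this
  have hsin : Real.sin θ < θ := Real.sin_lt h0
  have htan : Real.tan θ = Real.sin θ / Real.cos θ := Real.tan_eq_sin_div_cos θ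
  have hcpos : 0 < Real.cos θ := by linarith
  rw [htan, div_lt_iff₀ hcpos]
  nlinarith

/-- Estimate (4.7): with `t₀ = (r/2 − ρ₀)·tan θ₀`,
`δ = t₀²ρ₀/((ρ₀ − r/2)² + t₀²)` and `B = t₀ + √(4δ(ρ₀ − δ))`, one has
`δ < 4θ₀²ρ₀` and `B < rθ₀ + 4θ₀ρ₀`. -/
theorem neck_parameter_estimates
    (r ρ₀ θ₀ : ℝ) (hr : 0 < r) (hρ₀ : 0 < ρ₀) (hρ₀r : ρ₀ < r / 2)
    (hθ₀ : 0 < θ₀) (hθ₀' : θ₀ < 1)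
    (t₀ δ B : ℝ)
    (ht₀ : t₀ = (r / 2 - ρ₀) * Real.tan θ₀)
    (hδ : δ = t₀ ^ 2 * ρ₀ / ((ρ₀ - r / 2) ^ 2 + t₀ ^ 2))
    (hB : B = t₀ + Real.sqrt (4 * δ * (ρ₀ - δ))) :
    δ < 4 * θ₀ ^ 2 * ρ₀ ∧ B < r * θ₀ + 4 * θ₀ * ρ₀ := by
  have htanpos : 0 < Real.tan θ₀ := by
    apply Real.tan_pos_of_pos_of_lt_pi_div_two hθ₀
    nlinarith [Real.pi_gt_three]
  have htanlt : Real.tan θ₀ < 2 * θ₀ := tan_lt_two_mul θ₀ hθ₀ hθ₀'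
  have hsub : 0 < r / 2 - ρ₀ := by linarith
  have ht₀pos : 0 < t₀ := by rw [ht₀]; positivity
  have hden : 0 < (ρ₀ - r / 2) ^ 2 + t₀ ^ 2 := by positivity
  -- δ ≤ ρ₀ tan² θ₀
  have hδle : δ ≤ ρ₀ * Real.tan θ₀ ^ 2 := by
    rw [hδ, div_le_iff₀ hden, ht₀]
    have h : 0 ≤ ρ₀ * Real.tan θ₀ ^ 2 * ((r / 2 - ρ₀) * Real.tan θ₀) ^ 2 := by positivity
    nlinarith [h]
  have hδlt : δ < 4 * θ₀ ^ 2 * ρ₀ := by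
    have hmm : Real.tan θ₀ * Real.tan θ₀ < (2 * θ₀) * (2 * θ₀) :=
      mul_lt_mul'' htanlt htanlt htanpos.le htanpos.le
    have : ρ₀ * Real.tan θ₀ ^ 2 < 4 * θ₀ ^ 2 * ρ₀ := by nlinarith [hmm]
    linarith
  refine ⟨hδlt, ?_⟩
  have hδ0 : 0 ≤ δ := by rw [hδ]; positivity
  have hsq : Real.sqrt (4 * δ * (ρ₀ - δ)) < 4 * θ₀ * ρ₀ := by
    have h1 : 4 * δ * (ρ₀ - δ) ≤ 4 * δ * ρ₀ := by nlinarith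
    have h2 : 4 * δ * ρ₀ < (4 * θ₀ * ρ₀) ^ 2 := by nlinarith
    calc Real.sqrt (4 * δ * (ρ₀ - δ)) ≤ Real.sqrt (4 * δ * ρ₀) := Real.sqrt_le_sqrt h1
      _ < 4 * θ₀ * ρ₀ := by
          rw [show (4:ℝ) * θ₀ * ρ₀ = Real.sqrt ((4 * θ₀ * ρ₀) ^ 2) from
            (Real.sqrt_sq (by positivity)).symm]
          exact Real.sqrt_lt_sqrt (by positivity) h2
  have ht₀lt : t₀ < r * θ₀ := by
    rw [ht₀]; nlinarith
  rw [hB]; linarith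
end
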